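/- Let 1/√2 < λ₁ < 1 and λ₃ := λ₁/√(2λ₁² − 1), and set a := (λ₁+λ₃)/2, b := (λ₃−λ₁)/2, U₁ := [[1,0,0],[0,a,b],[0,b,a]] (a cubic-to-orthorhombic stretch tensor with d = 1 and eigenvalues λ₁, 1, λ₃). Let ê₁ := (0,1,0), ê₂ := (0,0,1), and define the compound twin shear a^c := ζ U₁ ê₂ with ζ := 2 (ê₂ · U₁^{-2} ê₁)/(ê₁ · U₁^{-2} ê₁). Then |a^c|² = 2 (λ₃² − λ₁²)²/(λ₃² + λ₁²), and for every μ ∈ [0,1], tr(U₁²) − det(U₁²) + (μ² − μ)|a^c|² − 2 = (1 − 2μ)² (λ₁² − 1)²/(2λ₁² − 1); in particular this quantity is strictly positive for μ ≠ 1/2 and equals zero at μ = 1/2. -/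

import Mathlib

open Matrix

noncomputable section

set_option maxHeartbeats 4000000

abbrev V3 : Type := Fin 3 → ℝ
abbrev M3 : Type := Matrix (Fin 3) (Fin 3) ℝ

/-- **Extreme compatibility, cubic-to-orthorhombic, compound part.** With
`1/√2 < λ₁ < 1`, `λ₃ = λ₁/√(2λ₁²−1)`, `U₁ = [[1,0,0],[0,a,b],[0,b,a]]`
(`a = (λ₁+λ₃)/2`, `b = (λ₃−λ₁)/2`), symmetry axes `ê₁ = (0,1,0)`,
`ê₂ = (0,0,1)`, and compound twin shear `a^c = ζ U₁ê₂` with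
`ζ = 2(ê₂·U₁⁻²ê₁)/(ê₁·U₁⁻²ê₁)`: the shear magnitude satisfies
`|a^c|² = 2(λ₃²−λ₁²)²/(λ₃²+λ₁²)`, and for every `μ ∈ [0,1]` the CC3′ quantity
`tr(U₁²) − det(U₁²) + (μ²−μ)|a^c|² − 2` equals
`(1−2μ)²(λ₁²−1)²/(2λ₁²−1)`; in particular it is strictly positive for
`μ ≠ 1/2` and vanishes at `μ = 1/2`. -/
theorem extreme_compatibility_ortho_compound
    (l1 l3 a b : ℝ)
    (hl1lo : 1 / Real.sqrt 2 < l1) (hl1hi : l1 < 1)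
    (hl3 : l3 = l1 / Real.sqrt (2 * l1 ^ 2 - 1))
    (ha : a = (l1 + l3) / 2) (hb : b = (l3 - l1) / 2)
    (U1 : M3) (hU1 : U1 = !![1, 0, 0; 0, a, b; 0, b, a])
    (e1 e2 : V3) (he1 : e1 = ![0, 1, 0]) (he2 : e2 = ![0, 0, 1])
    (ζ : ℝ)
    (hζ : ζ = 2 * (e2 ⬝ᵥ (U1⁻¹ * U1⁻¹).mulVec e1) /
      (e1 ⬝ᵥ (U1⁻¹ * U1⁻¹).mulVec e1))
    (ac : V3) (hac : ac = ζ • U1.mulVec e2) :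
    ac ⬝ᵥ ac = 2 * (l3 ^ 2 - l1 ^ 2) ^ 2 / (l3 ^ 2 + l1 ^ 2) ∧
    ∀ μ : ℝ, 0 ≤ μ → μ ≤ 1 →
      ((U1 * U1).trace - (U1 * U1).det + (μ ^ 2 - μ) * (ac ⬝ᵥ ac) - 2 =
        (1 - 2 * μ) ^ 2 * (l1 ^ 2 - 1) ^ 2 / (2 * l1 ^ 2 - 1)) ∧
      (μ ≠ 1 / 2 →
        0 < (U1 * U1).trace - (U1 * U1).det + (μ ^ 2 - μ) * (ac ⬝ᵥ ac) - 2) ∧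
      (μ = 1 / 2 →
        (U1 * U1).trace - (U1 * U1).det + (μ ^ 2 - μ) * (ac ⬝ᵥ ac) - 2 = 0) := by
  have hsq2 : (0:ℝ) < Real.sqrt 2 := Real.sqrt_pos.mpr (by norm_num)
  have hl1pos : 0 < l1 := lt_trans (by positivity) hl1lo
  have hlo' : 1 < l1 * Real.sqrt 2 := by
    rw [div_lt_iff₀ hsq2] at hl1lo; exact hl1lo
  have hl1sq : 1 / 2 < l1 ^ 2 := by
    have h : 1 < (l1 * Real.sqrt 2) ^ 2 := one_lt_pow₀ hlo' two_ne_zero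
    rw [mul_pow, Real.sq_sqrt (show (0:ℝ) ≤ 2 by norm_num)] at h
    linarith
  have hs : 0 < 2 * l1 ^ 2 - 1 := by linarith
  have hsr : Real.sqrt (2 * l1 ^ 2 - 1) ^ 2 = 2 * l1 ^ 2 - 1 := Real.sq_sqrt hs.le
  have hsrpos : 0 < Real.sqrt (2 * l1 ^ 2 - 1) := Real.sqrt_pos.mpr hs
  have hl3pos : 0 < l3 := by rw [hl3]; positivity
  have hl3sq : l3 ^ 2 = l1 ^ 2 / (2 * l1 ^ 2 - 1) := by
    rw [hl3, div_pow, hsr]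
  have hapos : 0 < a := by rw [ha]; linarith
  have habpos : 0 < a ^ 2 + b ^ 2 := by positivity
  have habne : a ^ 2 + b ^ 2 ≠ 0 := ne_of_gt habpos
  have hdlm : a ^ 2 - b ^ 2 = l1 * l3 := by rw [ha, hb]; ring
  have hdpos : 0 < a ^ 2 - b ^ 2 := by rw [hdlm]; positivity
  obtain ⟨d, hddef⟩ : ∃ d : ℝ, d = a ^ 2 - b ^ 2 := ⟨_, rfl⟩
  have hdne : d ≠ 0 := by rw [hddef]; exact ne_of_gt hdpos
  have hinv : U1⁻¹ = !![1, 0, 0; 0, a / d, -b / d; 0, -b / d, a / d] := by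
    apply inv_eq_right_inv
    rw [hU1]
    ext i j
    fin_cases i <;> fin_cases j <;>
      simp [Matrix.mul_apply, Fin.sum_univ_three, Matrix.one_apply,
        Matrix.vecHead, Matrix.vecTail] <;>
      · rw [hddef]; field_simp; ring
  have hnum : e2 ⬝ᵥ (U1⁻¹ * U1⁻¹).mulVec e1 = -(2 * a * b) / d ^ 2 := by
    rw [hinv, he1, he2]
    simp [Matrix.mulVec, dotProduct, Fin.sum_univ_three, Matrix.mul_apply]
    field_simp
    ring
  have hden : e1 ⬝ᵥ (U1⁻¹ * U1⁻¹).mulVec e1 = (a ^ 2 + b ^ 2) / d ^ 2 := by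
    rw [hinv, he1]
    simp [Matrix.mulVec, dotProduct, Fin.sum_univ_three, Matrix.mul_apply]
    field_simp
  have hζ' : ζ = -(4 * a * b) / (a ^ 2 + b ^ 2) := by
    rw [hζ, hnum, hden]
    field_simp
    ring
  have hacv : ac ⬝ᵥ ac = ζ ^ 2 * (a ^ 2 + b ^ 2) := by
    rw [hac, hU1, he2]
    simp [Matrix.mulVec, dotProduct, Fin.sum_univ_three]
    ring
  have hacv2 : ac ⬝ᵥ ac = 16 * (a * b) ^ 2 / (a ^ 2 + b ^ 2) := by
    rw [hacv, hζ']
    field_simp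
    ring
  have hab : a ^ 2 + b ^ 2 = (l1 ^ 2 + l3 ^ 2) / 2 := by rw [ha, hb]; ring
  have habprod : a * b = (l3 ^ 2 - l1 ^ 2) / 4 := by rw [ha, hb]; ring
  have hsumpos : 0 < l3 ^ 2 + l1 ^ 2 := by positivity
  have hsumne : l1 ^ 2 + l3 ^ 2 ≠ 0 := by positivity
  have hmag : ac ⬝ᵥ ac = 2 * (l3 ^ 2 - l1 ^ 2) ^ 2 / (l3 ^ 2 + l1 ^ 2) := by
    rw [hacv2, habprod, hab]
    field_simp
    ring
  have htr : (U1 * U1).trace = 1 + (l1 ^ 2 + l3 ^ 2) := by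
    rw [hU1]
    simp [Matrix.trace_fin_three, Matrix.mul_apply, Fin.sum_univ_three]
    rw [ha, hb]; ring
  have hdet : (U1 * U1).det = l1 ^ 2 * l3 ^ 2 := by
    rw [Matrix.det_mul, hU1, Matrix.det_fin_three]
    simp
    rw [ha, hb]; ring
  refine ⟨hmag, fun μ _ _ => ?_⟩
  have hsne : (2 * l1 ^ 2 - 1) ≠ 0 := ne_of_gt hs
  have hl1ne : l1 ≠ 0 := ne_of_gt hl1pos
  have key : (U1 * U1).trace - (U1 * U1).det + (μ ^ 2 - μ) * (ac ⬝ᵥ ac) - 2 =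
      (1 - 2 * μ) ^ 2 * (l1 ^ 2 - 1) ^ 2 / (2 * l1 ^ 2 - 1) := by
    have hden2 : l1 ^ 2 / (2 * l1 ^ 2 - 1) + l1 ^ 2 ≠ 0 := by positivity
    have hshear : 2 * (l3 ^ 2 - l1 ^ 2) ^ 2 / (l3 ^ 2 + l1 ^ 2) =
        4 * (1 - l1 ^ 2) ^ 2 / (2 * l1 ^ 2 - 1) := by
      rw [hl3sq]
      field_simp
      ring
    rw [htr, hdet, hmag, hshear, hl3sq]
    have hsne' : l1 ^ 2 * 2 - 1 ≠ 0 := by linarith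
    field_simp
    ring
  refine ⟨key, fun hμ => ?_, fun hμ => ?_⟩
  · rw [key]
    have h1 : (1 - 2 * μ) ≠ 0 := by
      intro h; apply hμ; linarith
    have h2 : l1 ^ 2 - 1 ≠ 0 := by
      have : l1 ^ 2 < 1 := by
        calc l1 ^ 2 < 1 ^ 2 := by exact pow_lt_pow_left₀ hl1hi hl1pos.le two_ne_zero
          _ = 1 := one_pow 2
      exact ne_of_lt (by linarith)
    exact div_pos (by positivity) hs
  · rw [key, hμ]; norm_num
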